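/- arXiv:1801.10251 — 2 statements merged into one kernel-verified Lean document; each statement's English description precedes it below -/
import Mathlib

section
/- Let U₁, …, U_n (n ≥ 2) be i.i.d. uniform [0,1] random variables and define V(r) = (n−1)^{-1/2} ∑_{k=2}^n [1{U_k ≤ r₁}·1{U_{k−1} ≤ r₂} − r₁r₂] for r ∈ [0,1]². Then for any r, s ∈ [0,1]², E[V(r)·V(s)] = (r₁∧s₁)(r₂∧s₂) + ((n−2)/(n−1))·[(r₁∧s₂)r₂s₁ + (r₂∧s₁)r₁s₂] − (1 + 2(n−2)/(n−1))·r₁r₂s₁s₂. -/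
/-!
Write `ξ_k(a, b) = 1{U_k ≤ a} 1{U_{k-1} ≤ b}`, so that `V(a, b)` is `(n-1)^{-1/2}` times the sum of
the centred `ξ_k(a, b)`, and `E V(r) V(s) = (n-1)⁻¹ ∑_{k,l} cov(ξ_k(r), ξ_l(s))`.
For `|k - l| ≥ 2` the four variables involved are distinct, so the covariance vanishes.
For `|k - l| ≤ 1` one variable is shared, and `1{x ≤ a} 1{x ≤ b} = 1{x ≤ a ∧ b}` turns the product
into one over distinct independent uniforms, whose expectation is the product of the thresholds.
The diagonal has `n - 1` entries and each neighbouring diagonal `n - 2`.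
-/

open MeasureTheory ProbabilityTheory Set

lemma min_mem_Icc {α : Type*} [LinearOrder α] {x y a b : α} (ha : a ∈ Icc x y)
    (hb : b ∈ Icc x y) : min a b ∈ Icc x y :=
  ⟨le_min ha.1 hb.1, (min_le_left a b).trans ha.2⟩

lemma indicator_Iic_mul_indicator_Iic {α M : Type*} [LinearOrder α] [MulZeroOneClass M]
    (a b x : α) :
    (Iic a).indicator (1 : α → M) x * (Iic b).indicator 1 x = (Iic (min a b)).indicator 1 x := by
  rw [← Iic_inter_Iic, inter_indicator_one, Pi.mul_apply]

section

variable {Ω : Type*} [MeasurableSpace Ω] {μ : Measure Ω}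

lemma integral_indicator_Iic_of_map_eq_uniform {X : Ω → ℝ} (hX : Measurable X)
    (hunif : μ.map X = volume.restrict (Icc 0 1)) {a : ℝ} (ha : a ∈ Icc (0 : ℝ) 1) :
    ∫ ω, (Iic a).indicator 1 (X ω) ∂μ = a := by
  have hinter : Iic a ∩ Icc 0 1 = Icc 0 a := by
    ext x
    simp only [mem_inter_iff, mem_Iic, mem_Icc]
    exact ⟨fun h => ⟨h.2.1, h.1⟩, fun h => ⟨h.2, h.1, h.2.trans ha.2⟩⟩
  rw [← integral_map (f := (Iic a).indicator 1) hX.aemeasurable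
    (stronglyMeasurable_one.indicator measurableSet_Iic).aestronglyMeasurable,
    hunif, integral_indicator_one measurableSet_Iic, measureReal_restrict_apply measurableSet_Iic,
    hinter, Real.volume_real_Icc_of_le ha.1, sub_zero]

lemma integral_prod_indicator_Iic_of_iIndepFun {ι κ : Type*} [Fintype κ] {U : ι → Ω → ℝ}
    (hU : ∀ i, Measurable (U i)) (hindep : iIndepFun U μ)
    (hunif : ∀ i, μ.map (U i) = volume.restrict (Icc 0 1))
    {idx : κ → ι} (hidx : idx.Injective) {c : κ → ℝ} (hc : ∀ t, c t ∈ Icc (0 : ℝ) 1) :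
    ∫ ω, ∏ t, (Iic (c t)).indicator 1 (U (idx t) ω) ∂μ = ∏ t, c t := by
  have hmeas (t : κ) : Measurable ((Iic (c t)).indicator (1 : ℝ → ℝ)) :=
    measurable_const.indicator measurableSet_Iic
  have hindep' : iIndepFun (fun t ω => (Iic (c t)).indicator (1 : ℝ → ℝ) (U (idx t) ω)) μ :=
    (hindep.precomp hidx).comp _ hmeas
  rw [hindep'.integral_fun_prod_eq_prod_integral
    fun t => ((hmeas t).comp (hU (idx t))).aestronglyMeasurable]
  exact Finset.prod_congr rfl fun t _ =>
    integral_indicator_Iic_of_map_eq_uniform (hU _) (hunif _) (hc t)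

noncomputable def lagIndicator (U : ℕ → Ω → ℝ) (a b : ℝ) (k : ℕ) (ω : Ω) : ℝ :=
  (Iic a).indicator 1 (U k ω) * (Iic b).indicator 1 (U (k - 1) ω)

lemma memLp_lagIndicator [IsFiniteMeasure μ] {U : ℕ → Ω → ℝ} (hU : ∀ i, Measurable (U i))
    (a b : ℝ) (k : ℕ) (p : ENNReal) : MemLp (lagIndicator U a b k) p μ := by
  have hmeas (c : ℝ) : Measurable ((Iic c).indicator (1 : ℝ → ℝ)) :=
    measurable_const.indicator measurableSet_Iic
  refine MemLp.of_bound
    (((hmeas a).comp (hU k)).mul ((hmeas b).comp (hU (k - 1)))).aestronglyMeasurable 1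
    (Filter.Eventually.of_forall fun ω => ?_)
  simp only [lagIndicator, indicator_apply]
  split_ifs <;> simp

variable {U : ℕ → Ω → ℝ} (hU : ∀ i, Measurable (U i))
  (hindep : iIndepFun U μ) (hunif : ∀ i, μ.map (U i) = volume.restrict (Icc 0 1))
  {r₁ r₂ s₁ s₂ : ℝ} (hr₁ : r₁ ∈ Icc (0 : ℝ) 1) (hr₂ : r₂ ∈ Icc (0 : ℝ) 1)
  (hs₁ : s₁ ∈ Icc (0 : ℝ) 1) (hs₂ : s₂ ∈ Icc (0 : ℝ) 1)
include hU hindep hunif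

include hr₁ hr₂ in
lemma integral_lagIndicator {k : ℕ} (hk : 1 ≤ k) :
    ∫ ω, lagIndicator U r₁ r₂ k ω ∂μ = r₁ * r₂ := by
  have h := integral_prod_indicator_Iic_of_iIndepFun hU hindep hunif (idx := ![k, k - 1])
    (c := ![r₁, r₂]) (by intro i j h; fin_cases i <;> fin_cases j <;> simp at h ⊢ <;> omega)
    (by intro t; fin_cases t <;> assumption)
  simpa [Fin.prod_univ_two, lagIndicator] using h

include hr₁ hr₂ hs₁ hs₂ in
lemma integral_lagIndicator_mul_self {k : ℕ} (hk : 1 ≤ k) :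
    ∫ ω, lagIndicator U r₁ r₂ k ω * lagIndicator U s₁ s₂ k ω ∂μ
      = min r₁ s₁ * min r₂ s₂ := by
  have h := integral_prod_indicator_Iic_of_iIndepFun hU hindep hunif (idx := ![k, k - 1])
    (c := ![min r₁ s₁, min r₂ s₂])
    (by intro i j h; fin_cases i <;> fin_cases j <;> simp at h ⊢ <;> omega)
    (by intro t; fin_cases t; exacts [min_mem_Icc hr₁ hs₁, min_mem_Icc hr₂ hs₂])
  simp only [Fin.prod_univ_two, Matrix.cons_val_zero, Matrix.cons_val_one] at h
  rw [← h]
  congr with ω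
  rw [lagIndicator, lagIndicator, ← indicator_Iic_mul_indicator_Iic,
    ← indicator_Iic_mul_indicator_Iic]
  ring

include hr₁ hr₂ hs₁ hs₂ in
lemma integral_lagIndicator_mul_succ {k : ℕ} (hk : 1 ≤ k) :
    ∫ ω, lagIndicator U r₁ r₂ k ω * lagIndicator U s₁ s₂ (k + 1) ω ∂μ
      = min r₁ s₂ * r₂ * s₁ := by
  have h := integral_prod_indicator_Iic_of_iIndepFun hU hindep hunif (idx := ![k, k - 1, k + 1])
    (c := ![min r₁ s₂, r₂, s₁])
    (by intro i j h; fin_cases i <;> fin_cases j <;> simp at h ⊢ <;> omega)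
    (by intro t; fin_cases t; exacts [min_mem_Icc hr₁ hs₂, hr₂, hs₁])
  simp only [Fin.prod_univ_three, Matrix.cons_val_zero, Matrix.cons_val_one, Matrix.cons_val_two,
    Matrix.head_cons, Matrix.tail_cons] at h
  rw [← h]
  congr with ω
  rw [lagIndicator, lagIndicator, Nat.add_sub_cancel, ← indicator_Iic_mul_indicator_Iic]
  ring

include hr₁ hr₂ hs₁ hs₂ in
lemma integral_lagIndicator_mul_of_far {k l : ℕ} (hk : 1 ≤ k) (hl : 1 ≤ l) (hkl : k ≠ l)
    (hsucc : l ≠ k + 1) (hpred : k ≠ l + 1) :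
    ∫ ω, lagIndicator U r₁ r₂ k ω * lagIndicator U s₁ s₂ l ω ∂μ = r₁ * r₂ * (s₁ * s₂) := by
  have h := integral_prod_indicator_Iic_of_iIndepFun hU hindep hunif (idx := ![k, k - 1, l, l - 1])
    (c := ![r₁, r₂, s₁, s₂])
    (by intro i j h; fin_cases i <;> fin_cases j <;> simp at h ⊢ <;> omega)
    (by intro t; fin_cases t <;> assumption)
  simp only [Fin.prod_univ_four, Matrix.cons_val_zero, Matrix.cons_val_one, Matrix.cons_val_two,
    Matrix.cons_val_three, Matrix.head_cons, Matrix.tail_cons] at h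
  rw [← mul_assoc, ← h]
  congr with ω
  rw [lagIndicator, lagIndicator]
  ring

include hr₁ hr₂ hs₁ hs₂ in
lemma integral_centered_lagIndicator_mul {k l : ℕ} (hk : 1 ≤ k) (hl : 1 ≤ l) :
    ∫ ω, (lagIndicator U r₁ r₂ k ω - r₁ * r₂) * (lagIndicator U s₁ s₂ l ω - s₁ * s₂) ∂μ =
      if l = k then min r₁ s₁ * min r₂ s₂ - r₁ * r₂ * (s₁ * s₂)
      else if l = k + 1 then min r₁ s₂ * r₂ * s₁ - r₁ * r₂ * (s₁ * s₂)
      else if k = l + 1 then min r₂ s₁ * r₁ * s₂ - r₁ * r₂ * (s₁ * s₂)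
      else 0 := by
  have := hindep.isProbabilityMeasure
  have hcov := covariance_eq_sub (μ := μ) (memLp_lagIndicator hU r₁ r₂ k 2)
    (memLp_lagIndicator hU s₁ s₂ l 2)
  rw [covariance, integral_lagIndicator hU hindep hunif hr₁ hr₂ hk,
    integral_lagIndicator hU hindep hunif hs₁ hs₂ hl] at hcov
  rw [hcov, Pi.mul_def]
  split_ifs with hdiag hsucc hpred
  · subst hdiag
    rw [integral_lagIndicator_mul_self hU hindep hunif hr₁ hr₂ hs₁ hs₂ hk]
  · subst hsucc
    rw [integral_lagIndicator_mul_succ hU hindep hunif hr₁ hr₂ hs₁ hs₂ hk]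
  · subst hpred
    simp_rw [mul_comm (lagIndicator U r₁ r₂ (l + 1) _)]
    rw [integral_lagIndicator_mul_succ hU hindep hunif hs₁ hs₂ hr₁ hr₂ hl, min_comm]
    ring
  · rw [integral_lagIndicator_mul_of_far hU hindep hunif hr₁ hr₂ hs₁ hs₂ hk hl (Ne.symm hdiag)
      hsucc hpred, sub_self]

end

lemma sum_Icc_sum_Icc_tridiagonal {M : Type*} [AddCommMonoid M] (a b : ℕ) (x y z : M) :
    ∑ k ∈ Finset.Icc a b, ∑ l ∈ Finset.Icc a b,
      (if l = k then x else if l = k + 1 then y else if k = l + 1 then z else 0)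
      = (b + 1 - a) • x + (b - a) • (y + z) := by
  have hsplit (k l : ℕ) :
      (if l = k then x else if l = k + 1 then y else if k = l + 1 then z else 0)
        = ((if l = k then x else 0) + if l = k + 1 then y else 0) + if k = l + 1 then z else 0 := by
    split_ifs <;> first | omega | simp
  have hoff (w : M) :
      ∑ k ∈ Finset.Icc a b, ∑ l ∈ Finset.Icc a b, (if l = k + 1 then w else 0) = (b - a) • w := by
    simp only [Finset.sum_ite_eq', ← Finset.sum_filter, Finset.sum_const]
    rw [show (Finset.Icc a b).filter (fun k => k + 1 ∈ Finset.Icc a b) = Finset.Ico a b by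
      ext k; simp only [Finset.mem_filter, Finset.mem_Icc, Finset.mem_Ico]; omega, Nat.card_Ico]
  simp only [hsplit, Finset.sum_add_distrib]
  rw [hoff, Finset.sum_comm (f := fun k l => if k = l + 1 then z else 0), hoff, smul_add, add_assoc]
  simp only [Finset.sum_ite_eq', Finset.sum_ite_mem, Finset.inter_self, Finset.sum_const,
    Nat.card_Icc]

theorem V2T_covariance_general {Ω : Type*} [MeasurableSpace Ω] (μ : Measure Ω)
    (U : ℕ → Ω → ℝ) (hU : ∀ k, Measurable (U k))
    (hindep : iIndepFun U μ)
    (hunif : ∀ k, Measure.map (U k) μ = volume.restrict (Set.Icc (0:ℝ) 1))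
    (n : ℕ) (hn : 2 ≤ n)
    (r₁ r₂ s₁ s₂ : ℝ) (hr₁ : r₁ ∈ Set.Icc (0:ℝ) 1) (hr₂ : r₂ ∈ Set.Icc (0:ℝ) 1)
    (hs₁ : s₁ ∈ Set.Icc (0:ℝ) 1) (hs₂ : s₂ ∈ Set.Icc (0:ℝ) 1)
    (V : ℝ → ℝ → Ω → ℝ)
    (hV : ∀ a b ω, V a b ω = (1 / Real.sqrt ((n:ℝ) - 1)) *
      ∑ k ∈ Finset.Icc 2 n,
        ((if U k ω ≤ a then (1:ℝ) else 0) * (if U (k-1) ω ≤ b then (1:ℝ) else 0) - a * b)) :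
    ∫ ω, V r₁ r₂ ω * V s₁ s₂ ω ∂μ
      = min r₁ s₁ * min r₂ s₂
        + (((n:ℝ) - 2) / ((n:ℝ) - 1)) * (min r₁ s₂ * r₂ * s₁ + min r₂ s₁ * r₁ * s₂)
        - (1 + 2 * ((n:ℝ) - 2) / ((n:ℝ) - 1)) * (r₁ * r₂ * s₁ * s₂) := by
  have := hindep.isProbabilityMeasure
  have hn' : (2 : ℝ) ≤ n := by exact_mod_cast hn
  have hV' (a b : ℝ) (ω : Ω) :
      V a b ω = 1 / √((n : ℝ) - 1) * ∑ k ∈ Finset.Icc 2 n, (lagIndicator U a b k ω - a * b) := by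
    simp [hV, lagIndicator, indicator_apply]
  have hint (k l : ℕ) : Integrable (fun ω =>
      (lagIndicator U r₁ r₂ k ω - r₁ * r₂) * (lagIndicator U s₁ s₂ l ω - s₁ * s₂)) μ :=
    ((memLp_lagIndicator hU r₁ r₂ k 2).sub (memLp_const _)).integrable_mul
      ((memLp_lagIndicator hU s₁ s₂ l 2).sub (memLp_const _))
  have hpos {k : ℕ} (hk : k ∈ Finset.Icc 2 n) : 1 ≤ k := by
    rw [Finset.mem_Icc] at hk; omega
  simp_rw [hV', mul_mul_mul_comm _ (Finset.sum _ _), Finset.sum_mul_sum]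
  rw [integral_const_mul,
    integral_finsetSum _ fun k _ => integrable_finsetSum _ fun l _ => hint k l,
    Finset.sum_congr rfl fun k hk => (integral_finsetSum _ fun l _ => hint k l).trans
      (Finset.sum_congr rfl fun l hl => integral_centered_lagIndicator_mul hU hindep hunif
        hr₁ hr₂ hs₁ hs₂ (hpos hk) (hpos hl)),
    sum_Icc_sum_Icc_tridiagonal, nsmul_eq_mul, nsmul_eq_mul, Nat.cast_sub (by omega),
    Nat.cast_sub hn, div_mul_div_comm, one_mul, Real.mul_self_sqrt (by linarith)]
  have hn1 : (n : ℝ) - 1 ≠ 0 := by linarith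
  push_cast
  field_simp
  ring

theorem V2T_covariance {Ω : Type*} [MeasurableSpace Ω] (μ : Measure Ω)
    [IsProbabilityMeasure μ]
    (U : ℕ → Ω → ℝ) (hU : ∀ k, Measurable (U k))
    (hindep : iIndepFun U μ)
    (hunif : ∀ k, Measure.map (U k) μ = volume.restrict (Set.Icc (0:ℝ) 1))
    (n : ℕ) (hn : 2 ≤ n)
    (r₁ r₂ s₁ s₂ : ℝ) (hr₁ : r₁ ∈ Set.Icc (0:ℝ) 1) (hr₂ : r₂ ∈ Set.Icc (0:ℝ) 1)
    (hs₁ : s₁ ∈ Set.Icc (0:ℝ) 1) (hs₂ : s₂ ∈ Set.Icc (0:ℝ) 1)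
    (V : ℝ → ℝ → Ω → ℝ)
    (hV : ∀ a b ω, V a b ω = (1 / Real.sqrt ((n:ℝ) - 1)) *
      ∑ k ∈ Finset.Icc 2 n,
        ((if U k ω ≤ a then (1:ℝ) else 0) * (if U (k-1) ω ≤ b then (1:ℝ) else 0) - a * b)) :
    ∫ ω, V r₁ r₂ ω * V s₁ s₂ ω ∂μ
      = min r₁ s₁ * min r₂ s₂
        + (((n:ℝ) - 2) / ((n:ℝ) - 1)) * (min r₁ s₂ * r₂ * s₁ + min r₂ s₁ * r₁ * s₂)
        - (1 + 2 * ((n:ℝ) - 2) / ((n:ℝ) - 1)) * (r₁ * r₂ * s₁ * s₂) :=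
  V2T_covariance_general μ U hU hindep hunif n hn r₁ r₂ s₁ s₂ hr₁ hr₂ hs₁ hs₂ V hV
end

section
/- Let Y be a random vector in ℝ^d with continuous joint distribution, whose joint CDF factorizes as F(y₁,…,y_d) = F₁(y₁)·F₂(y₂|y₁)⋯F_d(y_d|y₁,…,y_{d−1}), where each conditional CDF F_ℓ(·|y₁,…,y_{ℓ−1}) is continuous and strictly increasing. Then the random variables U_ℓ = F_ℓ(Y_ℓ | Y₁, …, Y_{ℓ−1}), ℓ = 1, …, d, are mutually independent and each uniformly distributed on [0,1]. -/
/-!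
Write `𝓕 ℓ` for the σ-algebra generated by `Y₁, …, Y_{ℓ-1}` and `Uℓ = Fℓ(Yℓ)`. For `A ∈ 𝓕 ℓ` and
`0 < t < 1`, the event `{Uℓ ≤ t}` is almost surely `{Yℓ ≤ Q}`, where `Q = Fℓ(·)⁻¹(t)` is an
`𝓕 ℓ`-measurable quantile. Substituting `Q` into the conditional CDF (exact for countably valued
`Q`, then by approximation from above and dominated convergence) gives
`P({Yℓ ≤ Q} ∩ A) = E[Fℓ(Q); A] = t P(A)`. Hence `Uℓ` is uniform and independent of `𝓕 ℓ`, which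
contains `U₁, …, U_{ℓ-1}`; mutual independence follows by peeling off the largest index.
-/

open MeasureTheory ProbabilityTheory Set Filter Topology

structure IsContinuousCDF (G : ℝ → ℝ) : Prop where
  continuous : Continuous G
  strictMono : StrictMono G
  tendsto_atBot : Tendsto G atBot (𝓝 0)
  tendsto_atTop : Tendsto G atTop (𝓝 1)

namespace IsContinuousCDF

variable {G : ℝ → ℝ}

theorem mem_Ioo (hG : IsContinuousCDF G) (z : ℝ) : G z ∈ Ioo 0 1 :=
  ⟨(hG.strictMono.monotone.le_of_tendsto hG.tendsto_atBot (z - 1)).trans_lt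
      (hG.strictMono (sub_one_lt z)),
    (hG.strictMono (lt_add_one z)).trans_le
      (hG.strictMono.monotone.ge_of_tendsto hG.tendsto_atTop (z + 1))⟩

theorem exists_eq (hG : IsContinuousCDF G) {t : ℝ} (ht : t ∈ Ioo 0 1) : ∃ z, G z = t :=
  mem_range_of_exists_le_of_exists_ge hG.continuous
    ((hG.tendsto_atBot.eventually (eventually_le_nhds ht.1)).exists)
    ((hG.tendsto_atTop.eventually (eventually_ge_nhds ht.2)).exists)

end IsContinuousCDF

/-- Since `arctan` maps `ℝ` into `(-π/2, π/2)`, the supremum is a genuine one even when no rational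
satisfies `G q ≤ t`, which makes `quantile` measurable in parameters. -/
noncomputable def quantile (G : ℝ → ℝ) (t : ℝ) : ℝ :=
  Real.tan (⨆ q : ℚ, if G q ≤ t then Real.arctan q else -(Real.pi / 2))

theorem quantile_eq {G : ℝ → ℝ} (hG : StrictMono G) {t z : ℝ} (hz : G z = t) :
    quantile G t = z := by
  have hterm : ∀ q : ℚ, (if G q ≤ t then Real.arctan q else -(Real.pi / 2))
      = if (q : ℝ) ≤ z then Real.arctan q else -(Real.pi / 2) := fun q => by
    simp only [← hz, hG.le_iff_le]
  have hle : ∀ q : ℚ, (if (q : ℝ) ≤ z then Real.arctan q else -(Real.pi / 2)) ≤ Real.arctan z :=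
    fun q => by
      split_ifs with h
      · exact Real.arctan_strictMono.monotone h
      · exact (Real.neg_pi_div_two_lt_arctan z).le
  obtain ⟨r, -, hr_le, hr⟩ := Real.exists_seq_rat_strictMono_tendsto z
  have hsup : (⨆ q : ℚ, if (q : ℝ) ≤ z then Real.arctan q else -(Real.pi / 2)) = Real.arctan z :=
    le_antisymm (ciSup_le hle) <| le_of_tendsto ((Real.continuous_arctan.tendsto z).comp hr)
      (Eventually.of_forall fun n => by
        simpa [(hr_le n).le] using le_ciSup ⟨_, forall_mem_range.2 hle⟩ (r n))
  simp only [quantile, hterm, hsup, Real.tan_arctan]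

theorem measurable_quantile {Ω : Type*} {m : MeasurableSpace Ω} {G : Ω → ℝ → ℝ}
    (hG : ∀ z, Measurable[m] fun ω => G ω z) (t : ℝ) :
    Measurable[m] fun ω => quantile (G ω) t :=
  have htan : Measurable Real.tan := by
    rw [show Real.tan = fun x => Real.sin x / Real.cos x from funext Real.tan_eq_sin_div_cos]
    fun_prop
  htan.comp <| .iSup fun q =>
    .ite (measurableSet_le (hG q) measurable_const) measurable_const measurable_const

noncomputable def ceilApprox (n : ℕ) (x : ℝ) : ℝ := ⌈x * (n + 1)⌉ / (n + 1)

theorem le_ceilApprox (n : ℕ) (x : ℝ) : x ≤ ceilApprox n x := by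
  rw [ceilApprox, le_div_iff₀ (by positivity)]
  exact Int.le_ceil _

theorem ceilApprox_lt (n : ℕ) (x : ℝ) : ceilApprox n x < x + 1 / (n + 1) := by
  rw [ceilApprox, div_lt_iff₀ (by positivity), add_mul, one_div_mul_cancel (by positivity)]
  exact Int.ceil_lt_add_one _

theorem tendsto_ceilApprox (x : ℝ) : Tendsto (fun n => ceilApprox n x) atTop (𝓝 x) :=
  tendsto_of_tendsto_of_tendsto_of_le_of_le tendsto_const_nhds
    (by simpa using tendsto_one_div_add_atTop_nhds_zero_nat.const_add x)
    (le_ceilApprox · x) fun n => (ceilApprox_lt n x).le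

theorem measurable_ceilApprox (n : ℕ) : Measurable (ceilApprox n) :=
  (measurable_from_top.comp (Int.measurable_ceil.comp (measurable_id.mul_const _))).div_const _

theorem iInf_comp_ceilApprox {G : ℝ → ℝ} (hc : Continuous G) (hmono : Monotone G) (x : ℝ) :
    ⨅ n, G (ceilApprox n x) = G x :=
  le_antisymm
    (ge_of_tendsto' ((hc.tendsto x).comp (tendsto_ceilApprox x))
      (fun n => ciInf_le ⟨G x, forall_mem_range.2 fun n => hmono (le_ceilApprox n x)⟩ n))
    (le_ciInf fun n => hmono (le_ceilApprox n x))

section Measurability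

variable {Ω : Type*} {m : MeasurableSpace Ω}

theorem Measurable.comp_countable {ι β : Type*} [Countable ι] [MeasurableSpace ι]
    [MeasurableSingletonClass ι] [MeasurableSpace β] {f : ι → Ω → β}
    (hf : ∀ i, Measurable (f i)) {k : Ω → ι} (hk : Measurable k) :
    Measurable fun ω => f (k ω) ω :=
  (measurable_from_prod_countable_left (f := fun p : Ω × ι => f p.2 p.1) hf).comp
    (measurable_id.prodMk hk)

theorem measurable_comp_ceilApprox {F : Ω → ℝ → ℝ} (hF : ∀ z, Measurable fun ω => F ω z)
    {Q : Ω → ℝ} (hQ : Measurable Q) (n : ℕ) :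
    Measurable fun ω => F ω (ceilApprox n (Q ω)) :=
  Measurable.comp_countable (f := fun (k : ℤ) ω => F ω (k / (n + 1))) (fun _ => hF _)
    (Int.measurable_ceil.comp (hQ.mul_const _))

end Measurability

/-- `ω ↦ F ω (Q ω)` itself need not be measurable: `F ω` is only almost surely continuous. -/
theorem exists_measurable_ae_eq_comp {Ω : Type*} {m mΩ : MeasurableSpace Ω} {μ : Measure Ω}
    {F : Ω → ℝ → ℝ} (hF : ∀ z, Measurable[m] fun ω => F ω z) {Q : Ω → ℝ} (hQ : Measurable[m] Q)
    (hFc : ∀ᵐ ω ∂μ, Continuous (F ω) ∧ Monotone (F ω)) :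
    ∃ V : Ω → ℝ, Measurable[m] V ∧ (fun ω => F ω (Q ω)) =ᵐ[μ] V :=
  ⟨fun ω => ⨅ n, F ω (ceilApprox n (Q ω)), .iInf (measurable_comp_ceilApprox hF hQ),
    hFc.mono fun _ h => (iInf_comp_ceilApprox h.1 h.2 _).symm⟩

section Independence

variable {Ω : Type*} {mΩ : MeasurableSpace Ω} {μ : Measure Ω} [IsProbabilityMeasure μ]

theorem iIndepFun_of_indep_past {ι : Type*} [LinearOrder ι] {β : ι → Type*}
    [∀ i, MeasurableSpace (β i)] {f : ∀ i, Ω → β i} (𝓕 : ι → MeasurableSpace Ω)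
    (hpast : ∀ i j, j < i → Measurable[𝓕 i] (f j))
    (hindep : ∀ i, Indep (MeasurableSpace.comap (f i) inferInstance) (𝓕 i) μ) :
    iIndepFun f μ := by
  classical
  rw [iIndepFun_iff_measure_inter_preimage_eq_mul]
  intro S sets hsets
  induction S using Finset.induction_on_max with
  | empty => simp
  | insert a S hlt ih =>
    have hpastS : MeasurableSet[𝓕 a] (⋂ i ∈ S, f i ⁻¹' sets i) :=
      .biInter S.countable_toSet fun i hi =>
        hpast a i (hlt i hi) (hsets i (Finset.mem_insert_of_mem hi))
    rw [Finset.set_biInter_insert, Finset.prod_insert fun ha => (hlt a ha).false,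
      (Indep_iff _ _ μ).1 (hindep a) _ _ ⟨_, hsets a (by simp), rfl⟩ hpastS,
      ih fun i hi => hsets i (Finset.mem_insert_of_mem hi)]

theorem indep_comap_of_measure_Iic_inter {U : Ω → ℝ} (hU : Measurable U)
    {m : MeasurableSpace Ω} (hm : m ≤ mΩ)
    (h : ∀ t A, MeasurableSet[m] A → μ (U ⁻¹' Iic t ∩ A) = μ (U ⁻¹' Iic t) * μ A) :
    Indep (MeasurableSpace.comap U inferInstance) m μ := by
  refine IndepSets.indep hU.comap_le hm (isPiSystem_Iic.comap U)
    (@MeasurableSpace.isPiSystem_measurableSet Ω m) ?_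
    (@MeasurableSpace.generateFrom_measurableSet Ω m).symm ?_
  · rw [BorelSpace.measurable_eq (α := ℝ), borel_eq_generateFrom_Iic,
      MeasurableSpace.comap_generateFrom]
    rfl
  · rw [IndepSets_iff]
    rintro _ A ⟨_, ⟨t, rfl⟩, rfl⟩ hA
    exact h t A hA

end Independence

theorem volume_restrict_Icc_Iic (t : ℝ) :
    volume.restrict (Icc (0 : ℝ) 1) (Iic t) = ENNReal.ofReal (min t 1) := by
  have : Iic t ∩ Icc 0 1 = Icc 0 (min t 1) := by
    ext
    simp only [mem_inter_iff, mem_Iic, mem_Icc, le_min_iff]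
    tauto
  rw [Measure.restrict_apply measurableSet_Iic, this, Real.volume_Icc, sub_zero]

structure IsCondCDF {Ω : Type*} [MeasurableSpace Ω] (μ : Measure Ω) (m : MeasurableSpace Ω)
    (X : Ω → ℝ) (F : Ω → ℝ → ℝ) : Prop where
  measurable : ∀ z, Measurable[m] fun ω => F ω z
  ae_eq_condExp : ∀ z, (fun ω => F ω z) =ᵐ[μ] μ[{ω | X ω ≤ z}.indicator (fun _ => (1 : ℝ)) | m]

namespace IsCondCDF

variable {Ω : Type*} {m mΩ : MeasurableSpace Ω} {μ : Measure Ω} {X : Ω → ℝ} {F : Ω → ℝ → ℝ}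

theorem integrable (hF : IsCondCDF μ m X F) (z : ℝ) : Integrable (fun ω => F ω z) μ :=
  integrable_condExp.congr (hF.ae_eq_condExp z).symm

variable [IsProbabilityMeasure μ]

theorem setIntegral_eq (hF : IsCondCDF μ m X F) (hm : m ≤ mΩ) (hX : Measurable X) (z : ℝ)
    {A : Set Ω} (hA : MeasurableSet[m] A) :
    ∫ ω in A, F ω z ∂μ = ∫ ω in A, {ω | X ω ≤ z}.indicator (fun _ => (1 : ℝ)) ω ∂μ := by
  rw [setIntegral_congr_ae (hm A hA) ((hF.ae_eq_condExp z).mono fun ω h _ => h)]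
  exact setIntegral_condExp hm
    ((integrable_const 1).indicator (measurableSet_le hX measurable_const)) hA

theorem integral_eq (hF : IsCondCDF μ m X F) (hm : m ≤ mΩ) (hX : Measurable X) (z : ℝ) :
    ∫ ω, F ω z ∂μ = μ.real {ω | X ω ≤ z} := by
  simpa [integral_indicator_const _ (measurableSet_le hX measurable_const)] using
    hF.setIntegral_eq hm hX z MeasurableSet.univ

theorem ae_mem_Icc (hF : IsCondCDF μ m X F) (hm : m ≤ mΩ) (hX : Measurable X) (z : ℝ) :
    ∀ᵐ ω ∂μ, F ω z ∈ Icc 0 1 := by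
  have h0 : 0 ≤ᵐ[μ] μ[{ω | X ω ≤ z}.indicator (fun _ => (1 : ℝ)) | m] :=
    condExp_nonneg (.of_forall fun ω => indicator_nonneg (fun _ _ => zero_le_one) _)
  have h1 : μ[{ω | X ω ≤ z}.indicator (fun _ => (1 : ℝ)) | m] ≤ᵐ[μ] μ[fun _ => (1 : ℝ) | m] :=
    condExp_mono ((integrable_const 1).indicator (measurableSet_le hX measurable_const))
      (integrable_const 1) (.of_forall fun ω => indicator_le_self' (fun _ _ => zero_le_one) ω)
  rw [condExp_const hm] at h1
  filter_upwards [hF.ae_eq_condExp z, h0, h1] with ω he h0 h1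
  exact he ▸ ⟨h0, h1⟩

theorem ae_tendsto_atTop (hF : IsCondCDF μ m X F) (hm : m ≤ mΩ) (hX : Measurable X)
    (hmono : ∀ᵐ ω ∂μ, Monotone (F ω)) :
    ∀ᵐ ω ∂μ, Tendsto (fun n : ℕ => F ω n) atTop (𝓝 1) := by
  have hlim : Tendsto (fun n : ℕ => μ.real {ω | X ω ≤ n}) atTop (𝓝 (μ.real univ)) := by
    have hU : (⋃ n : ℕ, {ω | X ω ≤ n}) = univ :=
      eq_univ_of_forall fun ω => mem_iUnion.2 (exists_nat_ge (X ω))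
    have := tendsto_measure_iUnion_atTop (μ := μ) (s := fun n : ℕ => {ω | X ω ≤ n})
      fun (i j : ℕ) (hij : i ≤ j) ω (hω : X ω ≤ i) => show X ω ≤ j from hω.trans (Nat.cast_le.2 hij)
    rw [hU] at this
    exact (ENNReal.tendsto_toReal (measure_ne_top μ univ)).comp this
  refine tendsto_of_integral_tendsto_of_monotone (F := fun _ => 1) (hF.integrable ·)
    (integrable_const 1) ?_ (hmono.mono fun ω h => h.comp Nat.mono_cast)
    (ae_all_iff.2 fun n => (hF.ae_mem_Icc hm hX n).mono fun ω h => h.2)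
  simpa [hF.integral_eq hm hX] using hlim

theorem ae_tendsto_atBot (hF : IsCondCDF μ m X F) (hm : m ≤ mΩ) (hX : Measurable X)
    (hmono : ∀ᵐ ω ∂μ, Monotone (F ω)) :
    ∀ᵐ ω ∂μ, Tendsto (fun n : ℕ => F ω (-n)) atTop (𝓝 0) := by
  have hlim : Tendsto (fun n : ℕ => μ.real {ω | X ω ≤ -n}) atTop (𝓝 (μ.real ∅)) := by
    have hI : (⋂ n : ℕ, {ω | X ω ≤ -n}) = ∅ :=
      eq_empty_of_forall_notMem fun ω hω => by
        obtain ⟨n, hn⟩ := exists_nat_gt (-X ω)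
        linarith [show X ω ≤ -n from mem_iInter.1 hω n]
    have := tendsto_measure_iInter_atTop (μ := μ) (s := fun n : ℕ => {ω | X ω ≤ -n})
      (fun n => (measurableSet_le hX measurable_const).nullMeasurableSet)
      (fun (i j : ℕ) (hij : i ≤ j) ω (hω : X ω ≤ -j) =>
        show X ω ≤ -i from hω.trans (neg_le_neg (Nat.cast_le.2 hij))) ⟨0, measure_ne_top μ _⟩
    rw [hI] at this
    exact (ENNReal.tendsto_toReal (measure_ne_top μ ∅)).comp this
  refine tendsto_of_integral_tendsto_of_antitone (F := fun _ => 0) (fun _ => hF.integrable _)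
    (integrable_const 0) ?_
    (hmono.mono fun ω h => h.comp_antitone fun (i j : ℕ) hij => neg_le_neg (Nat.cast_le.2 hij))
    (ae_all_iff.2 fun n => (hF.ae_mem_Icc hm hX _).mono fun ω h => h.1)
  simpa [hF.integral_eq hm hX] using hlim

theorem ae_isContinuousCDF (hF : IsCondCDF μ m X F) (hm : m ≤ mΩ) (hX : Measurable X)
    (hFc : ∀ᵐ ω ∂μ, Continuous (F ω) ∧ StrictMono (F ω)) :
    ∀ᵐ ω ∂μ, IsContinuousCDF (F ω) := by
  have hmono := hFc.mono fun ω h => h.2.monotone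
  filter_upwards [hFc, hF.ae_tendsto_atBot hm hX hmono, hF.ae_tendsto_atTop hm hX hmono]
    with ω ⟨hc, hs⟩ hbot htop
  refine ⟨hc, hs, tendsto_comp_neg_atTop_iff.1 ?_,
    (tendsto_iff_tendsto_subseq_of_monotone hs.monotone tendsto_natCast_atTop_atTop).2 htop⟩
  exact (tendsto_iff_tendsto_subseq_of_antitone (hs.monotone.comp_antitone fun _ _ => neg_le_neg)
    tendsto_natCast_atTop_atTop).2 hbot

theorem setIntegral_comp_countable (hF : IsCondCDF μ m X F) (hm : m ≤ mΩ) (hX : Measurable X)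
    {ι : Type*} [Countable ι] [MeasurableSpace ι] [MeasurableSingletonClass ι] {k : Ω → ι}
    (hk : Measurable[m] k) (g : ι → ℝ) {A : Set Ω} (hA : MeasurableSet[m] A) :
    ∫ ω in A, F ω (g (k ω)) ∂μ
      = ∫ ω in A, {ω | X ω ≤ g (k ω)}.indicator (fun _ => (1 : ℝ)) ω ∂μ := by
  set P : ι → Set Ω := fun i => A ∩ k ⁻¹' {i}
  have hP : ∀ i, MeasurableSet[m] (P i) := fun i => hA.inter (hk (measurableSet_singleton i))
  have hdisj : Pairwise (Function.onFun Disjoint P) := fun i j hij =>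
    disjoint_left.2 fun ω hi hj => hij (hi.2.symm.trans hj.2)
  have hA_eq : A = ⋃ i, P i := by ext ω; simp [P]
  have hpiece : ∀ i, ∫ ω in P i, F ω (g (k ω)) ∂μ
      = ∫ ω in P i, {ω | X ω ≤ g (k ω)}.indicator (fun _ => (1 : ℝ)) ω ∂μ := fun i => by
    have hk_eq : ∀ ω ∈ P i, k ω = i := fun ω hω => hω.2
    rw [setIntegral_congr_fun (hm _ (hP i)) fun ω hω => by rw [hk_eq ω hω],
      hF.setIntegral_eq hm hX (g i) (hP i)]
    exact setIntegral_congr_fun (hm _ (hP i)) fun ω hω => by simp [indicator, hk_eq ω hω]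
  have hint : Integrable (fun ω => F ω (g (k ω))) μ := by
    have hmeas := (Measurable.comp_countable (fun i => hF.measurable (g i)) hk).mono hm le_rfl
    refine Integrable.mono' (integrable_const 1) hmeas.aestronglyMeasurable ?_
    filter_upwards [ae_all_iff.2 fun i => hF.ae_mem_Icc hm hX (g i)] with ω h
    exact abs_le.2 ⟨by linarith [(h (k ω)).1], (h (k ω)).2⟩
  have hint' : Integrable ({ω | X ω ≤ g (k ω)}.indicator (fun _ => (1 : ℝ))) μ :=
    (integrable_const 1).indicator
      (measurableSet_le hX ((measurable_of_countable g).comp (hk.mono hm le_rfl)))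
  rw [hA_eq]
  have hsum := hasSum_integral_iUnion (fun i => hm _ (hP i)) hdisj hint'.integrableOn
  rw [← funext hpiece] at hsum
  exact (hasSum_integral_iUnion (fun i => hm _ (hP i)) hdisj hint.integrableOn).unique hsum

theorem setIntegral_comp (hF : IsCondCDF μ m X F) (hm : m ≤ mΩ) (hX : Measurable X)
    (hG : ∀ᵐ ω ∂μ, IsContinuousCDF (F ω)) {Q : Ω → ℝ} (hQ : Measurable[m] Q)
    {A : Set Ω} (hA : MeasurableSet[m] A) :
    ∫ ω in A, F ω (Q ω) ∂μ
      = ∫ ω in A, {ω | X ω ≤ Q ω}.indicator (fun _ => (1 : ℝ)) ω ∂μ := by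
  have happrox : ∀ n : ℕ, ∫ ω in A, F ω (ceilApprox n (Q ω)) ∂μ
      = ∫ ω in A, {ω | X ω ≤ ceilApprox n (Q ω)}.indicator (fun _ => (1 : ℝ)) ω ∂μ := fun n =>
    hF.setIntegral_comp_countable hm hX (k := fun ω => ⌈Q ω * (n + 1)⌉)
      (Int.measurable_ceil.comp (hQ.mul_const _)) (fun k => k / (n + 1)) hA
  have hlimF : Tendsto (fun n : ℕ => ∫ ω in A, F ω (ceilApprox n (Q ω)) ∂μ) atTop
      (𝓝 (∫ ω in A, F ω (Q ω) ∂μ)) := by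
    refine tendsto_integral_of_dominated_convergence (fun _ => 1) (fun n =>
        ((measurable_comp_ceilApprox hF.measurable hQ n).mono hm le_rfl).aestronglyMeasurable)
      (integrable_const 1) (fun n => ae_restrict_of_ae (hG.mono fun ω h => ?_))
      (ae_restrict_of_ae (hG.mono fun ω h =>
        (h.continuous.tendsto _).comp (tendsto_ceilApprox _)))
    rw [Real.norm_of_nonneg (h.mem_Ioo _).1.le]
    exact (h.mem_Ioo _).2.le
  have hlimI : Tendsto
      (fun n : ℕ => ∫ ω in A, {ω | X ω ≤ ceilApprox n (Q ω)}.indicator (fun _ => (1 : ℝ)) ω ∂μ)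
      atTop (𝓝 (∫ ω in A, {ω | X ω ≤ Q ω}.indicator (fun _ => (1 : ℝ)) ω ∂μ)) := by
    refine tendsto_integral_of_dominated_convergence (fun _ => 1)
      (fun n => (measurable_const.indicator (measurableSet_le hX
        ((measurable_ceilApprox n).comp (hQ.mono hm le_rfl)))).aestronglyMeasurable)
      (integrable_const 1) (fun n => .of_forall fun ω => norm_indicator_le_norm_self _ _ |>.trans
        (by simp)) (.of_forall fun ω => ?_)
    by_cases h : X ω ≤ Q ω
    · simp [h, h.trans (le_ceilApprox _ _)]
    · refine tendsto_const_nhds.congr' ?_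
      filter_upwards [(tendsto_ceilApprox (Q ω)).eventually (gt_mem_nhds (not_le.1 h))] with n hn
      simp [h, not_le.2 hn]
  exact tendsto_nhds_unique (funext happrox ▸ hlimF) hlimI

theorem measure_comp_le_inter (hF : IsCondCDF μ m X F) (hm : m ≤ mΩ) (hX : Measurable X)
    (hG : ∀ᵐ ω ∂μ, IsContinuousCDF (F ω)) (t : ℝ) {A : Set Ω} (hA : MeasurableSet[m] A) :
    μ ({ω | F ω (X ω) ≤ t} ∩ A) = ENNReal.ofReal (min t 1) * μ A := by
  rcases le_or_gt t 0 with ht0 | ht0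
  · rw [ENNReal.ofReal_of_nonpos ((min_le_left t 1).trans ht0), zero_mul]
    refine measure_mono_null inter_subset_left (measure_eq_zero_iff_ae_notMem.2 ?_)
    filter_upwards [hG] with ω h
    exact fun hle => ((h.mem_Ioo _).1.trans_le hle).not_ge ht0
  rcases le_or_gt 1 t with ht1 | ht1
  · rw [min_eq_right ht1, ENNReal.ofReal_one, one_mul]
    refine measure_congr (eventuallyEq_set.2 ?_)
    filter_upwards [hG] with ω h
    exact and_iff_right_of_imp fun _ => (h.mem_Ioo _).2.le.trans ht1
  set Q : Ω → ℝ := fun ω => quantile (F ω) t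
  have hQ : ∀ᵐ ω ∂μ, F ω (Q ω) = t := hG.mono fun ω h => by
    obtain ⟨z, hz⟩ := h.exists_eq ⟨ht0, ht1⟩
    simp only [Q, quantile_eq h.strictMono hz, hz]
  have hQm : Measurable[m] Q := measurable_quantile hF.measurable t
  have hset : ({ω | F ω (X ω) ≤ t} ∩ A : Set Ω) =ᵐ[μ] ({ω | X ω ≤ Q ω} ∩ A : Set Ω) := by
    refine eventuallyEq_set.2 ?_
    filter_upwards [hG, hQ] with ω h hQω
    change F ω (X ω) ≤ t ∧ ω ∈ A ↔ X ω ≤ Q ω ∧ ω ∈ A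
    rw [← hQω, h.strictMono.le_iff_le]
  have hreal : μ.real ({ω | X ω ≤ Q ω} ∩ A) = t * μ.real A := calc
    μ.real ({ω | X ω ≤ Q ω} ∩ A)
        = ∫ ω in A, {ω | X ω ≤ Q ω}.indicator (fun _ => (1 : ℝ)) ω ∂μ := by
          rw [integral_indicator_const _ (measurableSet_le hX (hQm.mono hm le_rfl)),
            measureReal_restrict_apply (measurableSet_le hX (hQm.mono hm le_rfl)), smul_eq_mul,
            mul_one]
    _ = ∫ ω in A, F ω (Q ω) ∂μ := (hF.setIntegral_comp hm hX hG hQm hA).symm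
    _ = ∫ _ in A, t ∂μ := setIntegral_congr_ae (hm A hA) (hQ.mono fun ω h _ => h)
    _ = t * μ.real A := by rw [setIntegral_const, smul_eq_mul, mul_comm]
  rw [measure_congr hset, ← ofReal_measureReal, hreal, ENNReal.ofReal_mul ht0.le,
    ofReal_measureReal, min_eq_left ht1.le]

theorem exists_indep_uniform (hF : IsCondCDF μ m X F) (hm : m ≤ mΩ) (hX : Measurable X)
    (hFc : ∀ᵐ ω ∂μ, Continuous (F ω) ∧ StrictMono (F ω)) :
    ∃ V : Ω → ℝ, Measurable[m ⊔ MeasurableSpace.comap X inferInstance] V ∧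
      (fun ω => F ω (X ω)) =ᵐ[μ] V ∧ Indep (MeasurableSpace.comap V inferInstance) m μ ∧
      μ.map V = volume.restrict (Icc 0 1) := by
  have hG := hF.ae_isContinuousCDF hm hX hFc
  obtain ⟨V, hVm, hV⟩ :=
    exists_measurable_ae_eq_comp (m := m ⊔ MeasurableSpace.comap X inferInstance)
      (fun z => (hF.measurable z).mono le_sup_left le_rfl)
      ((comap_measurable X).mono le_sup_right le_rfl) (hFc.mono fun _ h => ⟨h.1, h.2.monotone⟩)
  have hVm' : Measurable V := hVm.mono (sup_le hm hX.comap_le) le_rfl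
  have hlaw : ∀ t A, MeasurableSet[m] A →
      μ (V ⁻¹' Iic t ∩ A) = ENNReal.ofReal (min t 1) * μ A := fun t A hA => by
    rw [← hF.measure_comp_le_inter hm hX hG t hA]
    refine measure_congr (eventuallyEq_set.2 ?_)
    filter_upwards [hV] with ω h
    simp [h]
  have hlaw_univ : ∀ t, μ (V ⁻¹' Iic t) = ENNReal.ofReal (min t 1) := fun t => by
    simpa using hlaw t univ MeasurableSet.univ
  have := Measure.isProbabilityMeasure_map (μ := μ) hVm'.aemeasurable
  refine ⟨V, hVm, hV, indep_comap_of_measure_Iic_inter hVm' hm fun t A hA => ?_,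
    Measure.ext_of_Iic _ _ fun t => ?_⟩
  · rw [hlaw t A hA, hlaw_univ]
  · rw [Measure.map_apply hVm' measurableSet_Iic, hlaw_univ, volume_restrict_Icc_Iic]

end IsCondCDF

theorem rosenblatt_transform {Ω : Type*} [mΩ : MeasurableSpace Ω] (μ : Measure Ω)
    [IsProbabilityMeasure μ]
    (d : ℕ) (Y : Ω → Fin d → ℝ) (hY : Measurable Y)
    (F : Fin d → Ω → ℝ → ℝ)
    -- F ℓ ω z depends on ω only through Y₁,…,Y_{ℓ-1} :
    (hmeas : ∀ (ℓ : Fin d) (z : ℝ),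
      Measurable[⨆ j < ℓ, MeasurableSpace.comap (fun ω => Y ω j) inferInstance]
        (fun ω => F ℓ ω z))
    -- F ℓ ω · is the conditional CDF of Y_ℓ given Y₁,…,Y_{ℓ-1} :
    (hcond : ∀ (ℓ : Fin d) (z : ℝ),
      (fun ω => F ℓ ω z) =ᵐ[μ]
        μ[Set.indicator {ω | Y ω ℓ ≤ z} (fun _ => (1:ℝ)) |
          ⨆ j < ℓ, MeasurableSpace.comap (fun ω => Y ω j) inferInstance])
    (hcont : ∀ ℓ : Fin d, ∀ᵐ ω ∂μ, Continuous (F ℓ ω) ∧ StrictMono (F ℓ ω)) :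
    iIndepFun (fun (ℓ : Fin d) ω => F ℓ ω (Y ω ℓ)) μ ∧
      ∀ ℓ : Fin d, Measure.map (fun ω => F ℓ ω (Y ω ℓ)) μ
        = volume.restrict (Set.Icc (0:ℝ) 1) := by
  set 𝓕 : Fin d → MeasurableSpace Ω :=
    fun ℓ => ⨆ j < ℓ, MeasurableSpace.comap (fun ω => Y ω j) inferInstance
  have hY' : ∀ j, Measurable fun ω => Y ω j := fun j => (measurable_pi_apply j).comp hY
  have h𝓕 : ∀ ℓ, 𝓕 ℓ ≤ mΩ := fun ℓ => iSup₂_le fun j _ => (hY' j).comap_le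
  choose V hVm hV hindep hunif using fun ℓ =>
    (IsCondCDF.mk (hmeas ℓ) (hcond ℓ)).exists_indep_uniform (h𝓕 ℓ) (hY' ℓ) (hcont ℓ)
  have hpast : ∀ i j, j < i → Measurable[𝓕 i] (V j) := fun i j hji =>
    (hVm j).mono (sup_le (iSup₂_le fun k hk => le_iSup₂_of_le k (hk.trans hji) le_rfl)
      (le_iSup₂_of_le j hji le_rfl)) le_rfl
  exact ⟨(iIndepFun_congr hV).2 (iIndepFun_of_indep_past 𝓕 hpast hindep),
    fun ℓ => (Measure.map_congr (hV ℓ)).trans (hunif ℓ)⟩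
end
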